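/- arXiv:1909.04532 — 6 statements merged into one kernel-verified Lean document; each statement's English description precedes it below -/
import Mathlib

section
/- Let m ≥ 1 and let x₁,…,x_m be real numbers. Let S ⊆ {1,…,m} have complement of cardinality q with 2q + 1 < m, and suppose |x_i − c| ≤ σ for all i ∈ S, where c ∈ ℝ and σ ≥ 0. If μ ∈ ℝ is a median of x₁,…,x_m (i.e., 2·#{i : x_i ≤ μ} ≥ m and 2·#{i : μ ≤ x_i} ≥ m), then |μ − c| ≤ σ. -/
/-- Scalar robustness of the median (Lemma 1 of the LICM-SGD paper): if fewer than
half of the `m` values are Byzantine and every good value is within `σ` of `c`,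
then any median `μ` of all `m` values is within `σ` of `c`. -/
theorem median_close_to_reference
    (m q : ℕ) (hm : 1 ≤ m) (x : Fin m → ℝ) (S : Finset (Fin m))
    (hq : Sᶜ.card = q) (hhalf : 2 * q + 1 < m)
    (c σ : ℝ) (hσ : 0 ≤ σ) (hgood : ∀ i ∈ S, |x i - c| ≤ σ) (μ : ℝ)
    (hle : m ≤ 2 * (Finset.univ.filter (fun i => x i ≤ μ)).card)
    (hge : m ≤ 2 * (Finset.univ.filter (fun i => μ ≤ x i)).card) :
    |μ - c| ≤ σ := by
  rw [abs_sub_le_iff]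
  constructor
  · by_contra h
    push_neg at h
    have hsub : (Finset.univ.filter (fun i => μ ≤ x i)) ⊆ Sᶜ := by
      intro i hi
      simp only [Finset.mem_filter] at hi
      rw [Finset.mem_compl]
      intro hiS
      have := hgood i hiS
      rw [abs_sub_le_iff] at this
      linarith [hi.2, this.1]
    have := Finset.card_le_card hsub
    omega
  · by_contra h
    push_neg at h
    have hsub : (Finset.univ.filter (fun i => x i ≤ μ)) ⊆ Sᶜ := by
      intro i hi
      simp only [Finset.mem_filter] at hi
      rw [Finset.mem_compl]
      intro hiS
      have := hgood i hiS
      rw [abs_sub_le_iff] at this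
      linarith [hi.2, this.2]
    have := Finset.card_le_card hsub
    omega
end

section
/- Let g₁,…,g_m ∈ EuclideanSpace ℝ (Fin d) and let S ⊆ {1,…,m} have complement of cardinality q with 2q + 1 < m. Let c ∈ EuclideanSpace ℝ (Fin d) and σ ≥ 0, and suppose |[g_i]_j − c_j| ≤ σ for every good worker i ∈ S and every coordinate j. Let u ∈ EuclideanSpace ℝ (Fin d) be a coordinate-wise median of g₁,…,g_m, i.e., for every coordinate j, 2·#{i : [g_i]_j ≤ u_j} ≥ m and 2·#{i : u_j ≤ [g_i]_j} ≥ m. Then ‖u − c‖ ≤ √d · σ. -/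
/-- Vector form of Lemma 1 of the LICM-SGD paper: if fewer than half of the workers
are Byzantine and every good gradient deviates from `c` by at most `σ` in each
coordinate, then the coordinate-wise median `u` satisfies `‖u - c‖ ≤ √d · σ`. -/
theorem coordinatewise_median_close_to_reference
    (d m q : ℕ) (hm : 1 ≤ m)
    (g : Fin m → EuclideanSpace ℝ (Fin d)) (S : Finset (Fin m))
    (hq : Sᶜ.card = q) (hhalf : 2 * q + 1 < m)
    (c : EuclideanSpace ℝ (Fin d)) (σ : ℝ) (hσ : 0 ≤ σ)
    (hgood : ∀ i ∈ S, ∀ j : Fin d, |g i j - c j| ≤ σ)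
    (u : EuclideanSpace ℝ (Fin d))
    (hle : ∀ j : Fin d, m ≤ 2 * (Finset.univ.filter (fun i => g i j ≤ u j)).card)
    (hge : ∀ j : Fin d, m ≤ 2 * (Finset.univ.filter (fun i => u j ≤ g i j)).card) :
    ‖u - c‖ ≤ Real.sqrt d * σ := by
  -- per-coordinate bound
  have key : ∀ j : Fin d, |u j - c j| ≤ σ := by
    intro j
    have hmeet : ∀ (T : Finset (Fin m)), m ≤ 2 * T.card → ∃ i ∈ T, i ∈ S := by
      intro T hT
      by_contra h
      push_neg at h
      have hsub : T ⊆ Sᶜ := by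
        intro i hi
        simpa using h i hi
      have := Finset.card_le_card hsub
      omega
    have h1 : ∃ i ∈ S, g i j ≤ u j := by
      obtain ⟨i, hi, hiS⟩ := hmeet _ (hle j)
      exact ⟨i, hiS, by simpa using (Finset.mem_filter.mp hi).2⟩
    have h2 : ∃ i ∈ S, u j ≤ g i j := by
      obtain ⟨i, hi, hiS⟩ := hmeet _ (hge j)
      exact ⟨i, hiS, by simpa using (Finset.mem_filter.mp hi).2⟩
    obtain ⟨i1, hi1, hle1⟩ := h1
    obtain ⟨i2, hi2, hle2⟩ := h2
    have hb1 := abs_le.mp (hgood i1 hi1 j)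
    have hb2 := abs_le.mp (hgood i2 hi2 j)
    rw [abs_le]
    constructor <;> nlinarith [hb1.1, hb1.2, hb2.1, hb2.2]
  have hnorm : ‖u - c‖ = Real.sqrt (∑ j : Fin d, (u j - c j) ^ 2) := by
    rw [EuclideanSpace.norm_eq]
    congr 1
    apply Finset.sum_congr rfl
    intro j _
    simp [Real.norm_eq_abs, sq_abs]
  rw [hnorm]
  have hsum : (∑ j : Fin d, (u j - c j) ^ 2) ≤ d * σ ^ 2 := by
    calc (∑ j : Fin d, (u j - c j) ^ 2) ≤ ∑ _j : Fin d, σ ^ 2 := by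
          apply Finset.sum_le_sum
          intro j _
          have := key j
          nlinarith [abs_nonneg (u j - c j), sq_abs (u j - c j)]
      _ = d * σ ^ 2 := by simp [mul_comm]
  calc Real.sqrt (∑ j : Fin d, (u j - c j) ^ 2) ≤ Real.sqrt (d * σ ^ 2) :=
        Real.sqrt_le_sqrt hsum
    _ = Real.sqrt d * σ := by
        rw [Real.sqrt_mul (by positivity), Real.sqrt_sq hσ]
end

section
/- Let γ ≥ 1, constants A, B, C, D > 0, step size η with 2Bη² < 1, and vectors w, g₀, u₀, u ∈ EuclideanSpace ℝ (Fin d). Suppose: (i) ‖g₀‖² ≤ A + B·‖w‖²; (ii) w' = w − η·g₀; (iii) ‖u₀‖² ≤ C + D·‖w‖² and ‖u‖² ≤ C + D·‖w'‖²; and (iv) g̃ = (1/|T|)·Σ_{i∈T} g_i is the average of a nonempty finite family of vectors each satisfying the selection rule with parameter γ relative to u₀ and u, i.e., |[g_i]_j − [u₀]_j| ≤ γ·|[u]_j − [u₀]_j| for every coordinate j. Then ‖g̃‖² ≤ A' + B'·‖w'‖², where A' = 2(1+γ)²·(4C + 4ADη²/(1 − 2Bη²)) + 2C and B' = 2(1+γ)²·(2D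 + 4D/(1 − 2Bη²)) + 2D. -/
set_option maxHeartbeats 1000000


/-- Deterministic induction step of Lemma 2 (linear growth of the second moment)
of the LICM-SGD paper, case r = 2. -/
theorem licm_second_moment_induction_step
    {ι : Type*} (d : ℕ) (γ : ℝ) (hγ : 1 ≤ γ)
    (A B C D η : ℝ) (hA : 0 < A) (hB : 0 < B) (hC : 0 < C) (hD : 0 < D)
    (hη : 2 * B * η ^ 2 < 1)
    (w g₀ u₀ u : EuclideanSpace ℝ (Fin d))
    (hg₀ : ‖g₀‖ ^ 2 ≤ A + B * ‖w‖ ^ 2)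
    (w' : EuclideanSpace ℝ (Fin d)) (hw' : w' = w - η • g₀)
    (hu₀ : ‖u₀‖ ^ 2 ≤ C + D * ‖w‖ ^ 2)
    (hu : ‖u‖ ^ 2 ≤ C + D * ‖w'‖ ^ 2)
    (T : Finset ι) (hT : T.Nonempty) (g : ι → EuclideanSpace ℝ (Fin d))
    (hsel : ∀ i ∈ T, ∀ j : Fin d, |g i j - u₀ j| ≤ γ * |u j - u₀ j|)
    (gt : EuclideanSpace ℝ (Fin d))
    (hgt : gt = (T.card : ℝ)⁻¹ • ∑ i ∈ T, g i) :
    ‖gt‖ ^ 2 ≤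
      (2 * (1 + γ) ^ 2 * (4 * C + 4 * A * D * η ^ 2 / (1 - 2 * B * η ^ 2)) + 2 * C)
      + (2 * (1 + γ) ^ 2 * (2 * D + 4 * D / (1 - 2 * B * η ^ 2)) + 2 * D)
        * ‖w'‖ ^ 2 := by
  have hγ0 : (0:ℝ) ≤ γ := le_trans zero_le_one hγ
  have hε : 0 < 1 - 2 * B * η ^ 2 := by linarith
  -- Step 1: ‖g i - u₀‖ ≤ γ * ‖u - u₀‖
  have hstep1 : ∀ i ∈ T, ‖g i - u₀‖ ≤ γ * ‖u - u₀‖ := by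
    intro i hi
    rw [EuclideanSpace.norm_eq, EuclideanSpace.norm_eq]
    rw [← Real.sqrt_sq hγ0, ← Real.sqrt_mul (sq_nonneg γ)]
    apply Real.sqrt_le_sqrt
    rw [Finset.mul_sum]
    apply Finset.sum_le_sum
    intro j _
    have h := hsel i hi j
    have h2 : (g i - u₀) j = g i j - u₀ j := rfl
    have h3 : (u - u₀) j = u j - u₀ j := rfl
    rw [h2, h3, Real.norm_eq_abs, Real.norm_eq_abs]
    calc |g i j - u₀ j| ^ 2 ≤ (γ * |u j - u₀ j|) ^ 2 := by
          apply pow_le_pow_left₀ (abs_nonneg _) h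
      _ = γ ^ 2 * |u j - u₀ j| ^ 2 := by ring
  -- Step 2: each ‖g i‖ ≤ M
  set M : ℝ := ‖u‖ + (1 + γ) * ‖u - u₀‖ with hM
  have hMnn : 0 ≤ M := by positivity
  have hgi : ∀ i ∈ T, ‖g i‖ ≤ M := by
    intro i hi
    have h1 : ‖g i‖ ≤ ‖u‖ + ‖g i - u‖ := by
      have := norm_add_le u (g i - u)
      simpa using this
    have h2 : ‖g i - u‖ ≤ ‖g i - u₀‖ + ‖u₀ - u‖ := by
      have := norm_add_le (g i - u₀) (u₀ - u)
      simpa using this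
    have h3 : ‖u₀ - u‖ = ‖u - u₀‖ := norm_sub_rev _ _
    have h4 := hstep1 i hi
    rw [hM]
    nlinarith [norm_nonneg (u - u₀)]
  -- Step 3: ‖gt‖ ≤ M
  have hgtM : ‖gt‖ ≤ M := by
    rw [hgt]
    have hcard : (0:ℝ) < (T.card : ℝ) := by
      exact_mod_cast Finset.card_pos.mpr hT
    calc ‖(T.card : ℝ)⁻¹ • ∑ i ∈ T, g i‖
        = (T.card : ℝ)⁻¹ * ‖∑ i ∈ T, g i‖ := by
          rw [norm_smul, Real.norm_eq_abs, abs_inv, abs_of_pos hcard]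
      _ ≤ (T.card : ℝ)⁻¹ * (T.card * M) := by
          apply mul_le_mul_of_nonneg_left _ (by positivity)
          calc ‖∑ i ∈ T, g i‖ ≤ ∑ i ∈ T, ‖g i‖ := norm_sum_le _ _
            _ ≤ ∑ _i ∈ T, M := Finset.sum_le_sum hgi
            _ = T.card * M := by rw [Finset.sum_const, nsmul_eq_mul]
      _ = M := by field_simp
  have hgt2 : ‖gt‖ ^ 2 ≤ M ^ 2 := pow_le_pow_left₀ (norm_nonneg _) hgtM 2
  have hM2 : M ^ 2 ≤ 2 * ‖u‖ ^ 2 + 2 * (1 + γ) ^ 2 * ‖u - u₀‖ ^ 2 := by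
    rw [hM]
    nlinarith [sq_nonneg (‖u‖ - (1 + γ) * ‖u - u₀‖)]
  -- Step 4: ‖u - u₀‖² ≤ 2‖u‖² + 2‖u₀‖²
  have hdiff : ‖u - u₀‖ ^ 2 ≤ 2 * ‖u‖ ^ 2 + 2 * ‖u₀‖ ^ 2 := by
    have h := norm_sub_le u u₀
    nlinarith [sq_nonneg (‖u‖ - ‖u₀‖), norm_nonneg (u - u₀)]
  -- Step 5: bound ‖w‖²
  have hw2 : ‖w‖ ^ 2 ≤ (2 * ‖w'‖ ^ 2 + 2 * A * η ^ 2) / (1 - 2 * B * η ^ 2) := by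
    rw [le_div_iff₀ hε]
    have hweq : w = w' + η • g₀ := by rw [hw']; abel
    have h1 : ‖w‖ ≤ ‖w'‖ + |η| * ‖g₀‖ := by
      calc ‖w‖ = ‖w' + η • g₀‖ := by rw [← hweq]
        _ ≤ ‖w'‖ + ‖η • g₀‖ := norm_add_le _ _
        _ = ‖w'‖ + |η| * ‖g₀‖ := by rw [norm_smul, Real.norm_eq_abs]
    have h2 : ‖w‖ ^ 2 ≤ 2 * ‖w'‖ ^ 2 + 2 * (|η| * ‖g₀‖) ^ 2 := by
      nlinarith [sq_nonneg (‖w'‖ - |η| * ‖g₀‖), norm_nonneg w,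
        mul_nonneg (norm_nonneg w') (mul_nonneg (abs_nonneg η) (norm_nonneg g₀))]
    have h3 : (|η| * ‖g₀‖) ^ 2 = η ^ 2 * ‖g₀‖ ^ 2 := by
      rw [mul_pow, sq_abs]
    have h4 : η ^ 2 * ‖g₀‖ ^ 2 ≤ η ^ 2 * (A + B * ‖w‖ ^ 2) :=
      mul_le_mul_of_nonneg_left hg₀ (sq_nonneg η)
    nlinarith [h2, h3, h4]
  -- Final arithmetic
  have hZ : ‖u - u₀‖ ^ 2 ≤ 4 * C + 4 * A * D * η ^ 2 / (1 - 2 * B * η ^ 2)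
      + (2 * D + 4 * D / (1 - 2 * B * η ^ 2)) * ‖w'‖ ^ 2 := by
    have h2D : 2 * D * ‖w‖ ^ 2 ≤ 2 * D * ((2 * ‖w'‖ ^ 2 + 2 * A * η ^ 2) / (1 - 2 * B * η ^ 2)) :=
      mul_le_mul_of_nonneg_left hw2 (by positivity)
    have heq : 2 * D * ((2 * ‖w'‖ ^ 2 + 2 * A * η ^ 2) / (1 - 2 * B * η ^ 2))
        = 4 * A * D * η ^ 2 / (1 - 2 * B * η ^ 2)
          + (4 * D / (1 - 2 * B * η ^ 2)) * ‖w'‖ ^ 2 := by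
      field_simp
      ring
    linarith [hdiff, hu, hu₀]
  have hfin : 2 * (1 + γ) ^ 2 * ‖u - u₀‖ ^ 2
      ≤ 2 * (1 + γ) ^ 2 * (4 * C + 4 * A * D * η ^ 2 / (1 - 2 * B * η ^ 2)
        + (2 * D + 4 * D / (1 - 2 * B * η ^ 2)) * ‖w'‖ ^ 2) :=
    mul_le_mul_of_nonneg_left hZ (by positivity)
  nlinarith [hu, hgt2, hM2, hfin]
end

section
/- Let F : EuclideanSpace ℝ (Fin d) → ℝ be differentiable with ∇F L-Lipschitz, i.e., ‖∇F(x) − ∇F(y)‖ ≤ L·‖x − y‖ for all x, y. Let γ ≥ 1, η ≥ 0, s ≥ 0, and let w, g₀, u₀, u ∈ EuclideanSpace ℝ (Fin d) with w' = w − η·g₀. Suppose ‖u₀ − ∇F(w)‖ ≤ s and ‖u − ∇F(w')‖ ≤ s, and let g̃ = (1/|T|)·Σ_{i∈T} g_i be the average of a nonempty finite family of vectors each satisfying the selection rule with parameter γ relative to u₀ and u, i.e., |[g_i]_j − [u₀]_j| ≤ γ·|[u]_j − [u₀]_j| for every coordinate j. Then ‖g̃ − ∇F(w')‖ ≤ (3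 + 2γ)·s + (1+γ)·L·η·‖g₀‖. -/
/-!
Moving from `w` to `w' = w - η • g₀` shifts the gradient by at most `Lη‖g₀‖`, so both medians
lie within `2s + Lη‖g₀‖` of each other and `u₀` lies within `s + Lη‖g₀‖` of `∇F w'`. The
selection rule compares coordinates, and squaring and summing turns it into the Euclidean bound
`‖gᵢ - u₀‖ ≤ γ‖u - u₀‖`; hence every accepted gradient is within
`(1 + 2γ)s + (1 + γ)Lη‖g₀‖` of `∇F w'`, and so is their average, by convexity of balls.
-/

open Finset

theorem EuclideanSpace.norm_le_norm_of_forall_norm_le {𝕜 ι : Type*} [RCLike 𝕜] [Fintype ι]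
    {x y : EuclideanSpace 𝕜 ι} (h : ∀ i, ‖x i‖ ≤ ‖y i‖) : ‖x‖ ≤ ‖y‖ := by
  rw [EuclideanSpace.norm_eq, EuclideanSpace.norm_eq]
  gcongr with i
  exact h i

theorem Finset.norm_inv_card_smul_sum_sub_le {ι E : Type*} [SeminormedAddCommGroup E]
    [NormedSpace ℝ E] {T : Finset ι} (hT : T.Nonempty) {g : ι → E} {c : E} {r : ℝ}
    (h : ∀ i ∈ T, ‖g i - c‖ ≤ r) : ‖(#T : ℝ)⁻¹ • ∑ i ∈ T, g i - c‖ ≤ r := by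
  have hmem := (convex_closedBall c r).centerMass_mem (t := T) (w := fun _ ↦ (1 : ℝ)) (z := g)
    (fun _ _ ↦ zero_le_one) (by simpa using hT) (by simpa [dist_eq_norm] using h)
  simpa [Finset.centerMass, dist_eq_norm] using hmem

def LICMAccepts {ι : Type*} (γ : ℝ) (u₀ u g : EuclideanSpace ℝ ι) : Prop :=
  ∀ j, |g j - u₀ j| ≤ γ * |u j - u₀ j|

theorem LICMAccepts.norm_sub_le {ι : Type*} [Fintype ι] {γ : ℝ} {u₀ u g : EuclideanSpace ℝ ι}
    (hg : LICMAccepts γ u₀ u g) (hγ : 0 ≤ γ) : ‖g - u₀‖ ≤ γ * ‖u - u₀‖ := by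
  rw [← abs_of_nonneg hγ, ← Real.norm_eq_abs, ← norm_smul]
  refine EuclideanSpace.norm_le_norm_of_forall_norm_le fun j ↦ ?_
  simpa [abs_mul, abs_of_nonneg hγ] using hg j

theorem norm_sub_le_of_norm_sub_le_mul_norm_sub {E : Type*} [SeminormedAddCommGroup E]
    {x u₀ u G G' : E} {γ s D : ℝ} (hγ : 0 ≤ γ) (hx : ‖x - u₀‖ ≤ γ * ‖u - u₀‖)
    (hu₀ : ‖u₀ - G‖ ≤ s) (hu : ‖u - G'‖ ≤ s) (hG : ‖G' - G‖ ≤ D) :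
    ‖x - G'‖ ≤ (1 + 2 * γ) * s + (1 + γ) * D := by
  have hu₀G' : ‖u₀ - G'‖ ≤ s + D := by
    linarith [norm_sub_le_norm_sub_add_norm_sub u₀ G G', norm_sub_rev G G']
  have huu₀ : ‖u - u₀‖ ≤ 2 * s + D := by
    linarith [norm_sub_le_norm_sub_add_norm_sub u G' u₀, norm_sub_rev G' u₀]
  calc ‖x - G'‖ ≤ ‖x - u₀‖ + ‖u₀ - G'‖ := norm_sub_le_norm_sub_add_norm_sub x u₀ G'
    _ ≤ γ * (2 * s + D) + (s + D) := by gcongr; exact hx.trans (by gcongr)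
    _ = (1 + 2 * γ) * s + (1 + γ) * D := by ring

theorem licm_aggregate_deviation_bound_general
    {ι : Type*} (d : ℕ) (F : EuclideanSpace ℝ (Fin d) → ℝ) (L : ℝ)
    (hLip : ∀ x y : EuclideanSpace ℝ (Fin d),
      ‖gradient F x - gradient F y‖ ≤ L * ‖x - y‖)
    (γ η s : ℝ) (hγ : 1 ≤ γ) (hη : 0 ≤ η)
    (w g₀ u₀ u : EuclideanSpace ℝ (Fin d))
    (w' : EuclideanSpace ℝ (Fin d)) (hw' : w' = w - η • g₀)
    (hu₀ : ‖u₀ - gradient F w‖ ≤ s)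
    (hu : ‖u - gradient F w'‖ ≤ s)
    (T : Finset ι) (hT : T.Nonempty) (g : ι → EuclideanSpace ℝ (Fin d))
    (hsel : ∀ i ∈ T, ∀ j : Fin d, |g i j - u₀ j| ≤ γ * |u j - u₀ j|)
    (gt : EuclideanSpace ℝ (Fin d))
    (hgt : gt = (T.card : ℝ)⁻¹ • ∑ i ∈ T, g i) :
    ‖gt - gradient F w'‖ ≤ (3 + 2 * γ) * s + (1 + γ) * L * η * ‖g₀‖ := by
  have hstep : ‖gradient F w' - gradient F w‖ ≤ L * η * ‖g₀‖ := by
    simpa [hw', norm_smul, abs_of_nonneg hη, mul_assoc] using hLip w' w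
  have hs : 0 ≤ s := (norm_nonneg _).trans hu₀
  have hγ₀ : 0 ≤ γ := by linarith
  rw [hgt]
  refine Finset.norm_inv_card_smul_sum_sub_le hT fun i hi ↦ ?_
  have hgi := norm_sub_le_of_norm_sub_le_mul_norm_sub hγ₀
    (LICMAccepts.norm_sub_le (hsel i hi) hγ₀) hu₀ hu hstep
  linarith

/-- Central deviation estimate in the proof of Theorem 1 (Byzantine resilience) of
the LICM-SGD paper: if the coordinate-wise medians `u₀, u` at two consecutive SGD
iterates are each within `s` of the corresponding true gradients, then the
screened-and-averaged aggregate `g̃` is within `(3+2γ)s + (1+γ)Lη‖g₀‖` of the true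
gradient at the new iterate. -/
theorem licm_aggregate_deviation_bound
    {ι : Type*} (d : ℕ) (F : EuclideanSpace ℝ (Fin d) → ℝ) (L : ℝ)
    (hF : Differentiable ℝ F)
    (hLip : ∀ x y : EuclideanSpace ℝ (Fin d),
      ‖gradient F x - gradient F y‖ ≤ L * ‖x - y‖)
    (γ η s : ℝ) (hγ : 1 ≤ γ) (hη : 0 ≤ η) (hs : 0 ≤ s)
    (w g₀ u₀ u : EuclideanSpace ℝ (Fin d))
    (w' : EuclideanSpace ℝ (Fin d)) (hw' : w' = w - η • g₀)
    (hu₀ : ‖u₀ - gradient F w‖ ≤ s)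
    (hu : ‖u - gradient F w'‖ ≤ s)
    (T : Finset ι) (hT : T.Nonempty) (g : ι → EuclideanSpace ℝ (Fin d))
    (hsel : ∀ i ∈ T, ∀ j : Fin d, |g i j - u₀ j| ≤ γ * |u j - u₀ j|)
    (gt : EuclideanSpace ℝ (Fin d))
    (hgt : gt = (T.card : ℝ)⁻¹ • ∑ i ∈ T, g i) :
    ‖gt - gradient F w'‖ ≤ (3 + 2 * γ) * s + (1 + γ) * L * η * ‖g₀‖ :=
  licm_aggregate_deviation_bound_general d F L hLip γ η s hγ hη w g₀ u₀ u w' hw' hu₀ hu T hT g hsel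
    gt hgt
end

section
/- Let (a_k)_{k≥0} and (η_k)_{k≥0} be sequences of nonnegative real numbers, and let C ≥ 0. Suppose Σ_{k=0}^{∞} η_k = ∞, Σ_{k=0}^{∞} η_k·a_k < ∞, and |a_{k+1} − a_k| ≤ C·η_k for all k. Then a_k → 0 as k → ∞. -/
/-!
If `a` reached `ε` infinitely often then, since `∑ η = ∞` and `∑ η a < ∞` force `a` below `ε / 2`
infinitely often, `a` would have to fall from `ε` to `ε / 2` over arbitrarily late blocks
`[n, m)`. On such a block `a ≥ ε / 2`, so `(ε / 2) ∑ η ≤ ∑ η a` is as small as a tail of a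
convergent series, while the increment bound gives `ε / 2 ≤ a n - a m ≤ C ∑ η`.
-/

open Filter Finset

theorem Summable.eventually_forall_norm_sum_Ico_lt {E : Type*} [SeminormedAddCommGroup E]
    {f : ℕ → E} (hf : Summable f) {δ : ℝ} (hδ : 0 < δ) :
    ∀ᶠ n in atTop, ∀ m, ‖∑ k ∈ Ico n m, f k‖ < δ := by
  obtain ⟨s, hs⟩ := hf.vanishing (Metric.ball_mem_nhds 0 hδ)
  obtain ⟨N, hsN⟩ := s.exists_nat_subset_range
  filter_upwards [eventually_ge_atTop N] with n hn m
  have hdisj : Disjoint (Ico n m) s := disjoint_left.2 fun k hk hks => by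
    have := mem_range.1 (hsN hks)
    have := (mem_Ico.1 hk).1
    omega
  simpa using hs _ hdisj

theorem Nat.exists_first_ge_of_frequently {p : ℕ → Prop} (hp : ∃ᶠ k in atTop, p k) (n : ℕ) :
    ∃ m, n ≤ m ∧ p m ∧ ∀ k ∈ Ico n m, ¬ p k := by
  classical
  have hex : ∃ m, p m ∧ n ≤ m := (hp.and_eventually (eventually_ge_atTop n)).exists
  obtain ⟨hpm, hnm⟩ := Nat.find_spec hex
  exact ⟨_, hnm, hpm, fun k hk hpk => Nat.find_min hex (mem_Ico.1 hk).2 ⟨hpk, (mem_Ico.1 hk).1⟩⟩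

section

variable {a η : ℕ → ℝ}

theorem frequently_lt_of_summable_mul (hη : ∀ k, 0 ≤ η k) (hη_not : ¬ Summable η)
    (hsum : Summable fun k => η k * a k) {c : ℝ} (hc : 0 < c) :
    ∃ᶠ k in atTop, a k < c := by
  refine fun h_ev => hη_not (.of_norm_bounded_eventually_nat (hsum.mul_left c⁻¹) ?_)
  filter_upwards [h_ev] with k hk
  rw [not_lt] at hk
  rw [Real.norm_of_nonneg (hη k), ← mul_assoc, mul_comm c⁻¹, mul_assoc]
  exact le_mul_of_one_le_right (hη k) ((one_le_inv_mul₀ hc).2 hk)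

theorem mul_sub_le_sum_Ico_of_le {C c : ℝ} (hC : 0 ≤ C) (hc : 0 ≤ c) (hη : ∀ k, 0 ≤ η k)
    (hinc : ∀ k, |a (k + 1) - a k| ≤ C * η k) {n m : ℕ} (hnm : n ≤ m)
    (hle : ∀ k ∈ Ico n m, c ≤ a k) :
    c * (a n - a m) ≤ ∑ k ∈ Ico n m, C * (η k * a k) := by
  have hdrop : a n - a m ≤ ∑ k ∈ Ico n m, C * η k :=
    (le_abs_self _).trans <| dist_le_Ico_sum_of_dist_le (f := a) hnm fun _ _ => by
      rw [Real.dist_eq, abs_sub_comm]; exact hinc _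
  calc c * (a n - a m) ≤ c * ∑ k ∈ Ico n m, C * η k := mul_le_mul_of_nonneg_left hdrop hc
    _ = ∑ k ∈ Ico n m, C * (η k * c) := by rw [mul_sum]; exact sum_congr rfl fun _ _ => by ring
    _ ≤ ∑ k ∈ Ico n m, C * (η k * a k) := sum_le_sum fun k hk =>
      mul_le_mul_of_nonneg_left (mul_le_mul_of_nonneg_left (hle k hk) (hη k)) hC

end

/-- Deterministic sequence lemma behind the conclusion of Theorem 2 of the
LICM-SGD paper: divergent weights, summability of the weighted sequence, and a
per-step change bound proportional to the step size force convergence to zero. -/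
theorem tendsto_zero_of_summable_weighted_of_increment_bound
    (a η : ℕ → ℝ) (C : ℝ) (hC : 0 ≤ C)
    (ha : ∀ k, 0 ≤ a k) (hη : ∀ k, 0 ≤ η k)
    (hdiv : Filter.Tendsto (fun n => ∑ k ∈ Finset.range n, η k)
      Filter.atTop Filter.atTop)
    (hsum : Summable (fun k => η k * a k))
    (hinc : ∀ k, |a (k + 1) - a k| ≤ C * η k) :
    Filter.Tendsto a Filter.atTop (nhds 0) := by
  have hη_not : ¬ Summable η := (not_summable_iff_tendsto_nat_atTop_of_nonneg hη).2 hdiv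
  refine tendsto_order.2 ⟨fun b hb => .of_forall fun n => hb.trans_le (ha n), fun ε hε => ?_⟩
  have hc : 0 < ε / 2 := half_pos hε
  have hfreq := frequently_lt_of_summable_mul hη hη_not hsum hc
  filter_upwards [(hsum.mul_left C).eventually_forall_norm_sum_Ico_lt (mul_pos hc hc)]
    with n htail
  by_contra! hn
  obtain ⟨m, hnm, ham, hle⟩ := Nat.exists_first_ge_of_frequently hfreq n
  have hdrop := mul_sub_le_sum_Ico_of_le hC hc.le hη hinc hnm fun k hk => not_lt.1 (hle k hk)
  have hsmall := (le_abs_self _).trans_lt (htail m)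
  have hbig : ε / 2 * (ε / 2) < ε / 2 * (a n - a m) := mul_lt_mul_of_pos_left (by linarith) hc
  linarith
end

section
/- Let F : EuclideanSpace ℝ (Fin d) → ℝ be differentiable with ∇F L-Lipschitz and F bounded below. Let (η_k)_{k≥0} be positive step sizes with Σ_{k=0}^{∞} η_k = ∞ and Σ_{k=0}^{∞} η_k² < ∞. Let (w_k)_{k≥0} and (g_k)_{k≥0} be sequences in EuclideanSpace ℝ (Fin d) with w_{k+1} = w_k − η_k·g_k for all k, and suppose there exist constants G > 0, c > 0, and R > 0 such that for all k: ‖g_k‖ ≤ G, ⟨g_k, ∇F(w_k)⟩ ≥ c·‖∇F(w_k)‖², and ‖w_k‖ ≤ R. Then ∇F(w_k) → 0 as k → ∞. -/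
open RealInnerProductSpace

/-!
The descent lemma for an `L`-smooth `F`, applied to the step `w (k+1) = w k - η k • g k`, gives
`F (w (k+1)) ≤ F (w k) - c η_k ‖∇F (w k)‖² + (|L| / 2) G² η_k²`. Telescoping against the lower
bound of `F` and `∑ η_k² < ∞` yields `∑ η_k ‖∇F (w k)‖² < ∞`. The numbers `a_k = ‖∇F (w k)‖` move
by at most `|L| G η_k` per step, so whenever `a_n ≥ ε` they stay above `ε / 2` until the step
sizes from `n` on add up to `ε / (2 |L| G)`. As `∑ η_k = ∞` that time is always reached, and each
such stretch contributes a fixed amount to the convergent series `∑ η_k a_k²`, so `a_n ≥ ε`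
happens only finitely often.
-/

open Filter Finset Topology

section Descent

variable {E : Type*} [NormedAddCommGroup E] [InnerProductSpace ℝ E] [CompleteSpace E]

theorem DifferentiableAt.hasDerivAt_comp_add_smul {F : E → ℝ} {x v : E} {t : ℝ}
    (hF : DifferentiableAt ℝ F (x + t • v)) :
    HasDerivAt (fun s : ℝ => F (x + s • v)) ⟪gradient F (x + t • v), v⟫ t := by
  have hline : HasDerivAt (fun s : ℝ => x + s • v) v t := by
    simpa using ((hasDerivAt_id t).smul_const v).const_add x
  simpa [InnerProductSpace.toDual_apply_apply, Function.comp_def] using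
    hF.hasGradientAt.hasFDerivAt.comp_hasDerivAt t hline

theorem Differentiable.apply_add_le_of_lipschitz_gradient {F : E → ℝ} {L : ℝ}
    (hF : Differentiable ℝ F) (hLip : ∀ x y, ‖gradient F x - gradient F y‖ ≤ L * ‖x - y‖)
    (x v : E) : F (x + v) ≤ F x + ⟪gradient F x, v⟫ + L / 2 * ‖v‖ ^ 2 := by
  -- `φ` is the gap to the quadratic upper model along the segment; it is antitone on `[0, 1]`.
  let φ : ℝ → ℝ := fun t => F (x + t • v) - t * ⟪gradient F x, v⟫ - L / 2 * ‖v‖ ^ 2 * t ^ 2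
  have hφ : ∀ t, HasDerivAt φ
      (⟪gradient F (x + t • v) - gradient F x, v⟫ - L * t * ‖v‖ ^ 2) t := by
    intro t
    have h := ((DifferentiableAt.hasDerivAt_comp_add_smul (x := x) (v := v) (hF _)).sub
      ((hasDerivAt_id t).mul_const ⟪gradient F x, v⟫)).sub
      ((hasDerivAt_pow 2 t).const_mul (L / 2 * ‖v‖ ^ 2))
    refine h.congr_deriv ?_
    rw [inner_sub_left]
    ring
  have hanti : AntitoneOn φ (Set.Icc 0 1) := by
    have hdiff : Differentiable ℝ φ := fun t => (hφ t).differentiableAt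
    refine antitoneOn_of_deriv_nonpos (convex_Icc 0 1) hdiff.continuous.continuousOn
      hdiff.differentiableOn fun t ht => ?_
    rw [interior_Icc] at ht
    rw [(hφ t).deriv, sub_nonpos]
    calc ⟪gradient F (x + t • v) - gradient F x, v⟫
        ≤ ‖gradient F (x + t • v) - gradient F x‖ * ‖v‖ := real_inner_le_norm _ _
      _ ≤ L * ‖x + t • v - x‖ * ‖v‖ := by gcongr; exact hLip _ _
      _ = L * t * ‖v‖ ^ 2 := by
          rw [add_sub_cancel_left, norm_smul, Real.norm_of_nonneg ht.1.le]
          ring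
  have h01 := hanti (Set.left_mem_Icc.2 zero_le_one) (Set.right_mem_Icc.2 zero_le_one) zero_le_one
  simp only [φ, one_smul, zero_smul, add_zero] at h01
  linarith

theorem Differentiable.apply_sub_smul_le_of_inner_gradient_ge {F : E → ℝ} {L c G η : ℝ}
    (hF : Differentiable ℝ F) (hLip : ∀ x y, ‖gradient F x - gradient F y‖ ≤ L * ‖x - y‖)
    {x g : E} (hη : 0 ≤ η) (hg : ‖g‖ ≤ G) (hip : c * ‖gradient F x‖ ^ 2 ≤ ⟪g, gradient F x⟫) :
    F (x - η • g) ≤ F x - c * (η * ‖gradient F x‖ ^ 2) + |L| / 2 * G ^ 2 * η ^ 2 := by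
  have h := hF.apply_add_le_of_lipschitz_gradient hLip x (-(η • g))
  rw [← sub_eq_add_neg, inner_neg_right, real_inner_smul_right, real_inner_comm, norm_neg,
    norm_smul, Real.norm_of_nonneg hη] at h
  have hquad : L / 2 * (η * ‖g‖) ^ 2 ≤ |L| / 2 * G ^ 2 * η ^ 2 := by
    have : (η * ‖g‖) ^ 2 ≤ η ^ 2 * G ^ 2 := by
      rw [mul_pow]; gcongr
    nlinarith [le_abs_self L, abs_nonneg L, sq_nonneg (η * ‖g‖)]
  nlinarith [mul_le_mul_of_nonneg_left hip hη]

end Descent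

theorem summable_of_succ_le_sub_add {f e s : ℕ → ℝ} (hf : BddBelow (Set.range f))
    (he : ∀ k, 0 ≤ e k) (hs : Summable s) (hs₀ : ∀ k, 0 ≤ s k)
    (hstep : ∀ k, f (k + 1) ≤ f k - e k + s k) : Summable e := by
  obtain ⟨B, hB⟩ := hf
  refine summable_of_sum_range_le he (c := f 0 - B + ∑' k, s k) fun n => ?_
  have htel : ∑ k ∈ range n, e k ≤ f 0 - f n + ∑ k ∈ range n, s k := by
    rw [← sum_range_sub' f]
    simpa only [← sum_sub_distrib, ← sum_add_distrib] using
      sum_le_sum fun k _ => show e k ≤ f k - f (k + 1) + s k by linarith [hstep k]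
  linarith [hB (Set.mem_range_self n), hs.sum_le_tsum (range n) fun k _ => hs₀ k]

theorem exists_first_sum_Ico_ge {η : ℕ → ℝ}
    (hdiv : Tendsto (fun n => ∑ k ∈ range n, η k) atTop atTop) (n : ℕ) {δ : ℝ} (hδ : 0 < δ) :
    ∃ m, n < m ∧ δ ≤ ∑ k ∈ Ico n m, η k ∧ ∀ j < m, ∑ k ∈ Ico n j, η k < δ := by
  classical
  have hex : ∃ m, δ ≤ ∑ k ∈ Ico n m, η k := by
    obtain ⟨m, hm, hnm⟩ := ((tendsto_atTop.1 hdiv (δ + ∑ k ∈ range n, η k)).and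
      (eventually_ge_atTop n)).exists
    exact ⟨m, by rw [sum_Ico_eq_sub _ hnm]; linarith⟩
  refine ⟨Nat.find hex, ?_, Nat.find_spec hex, fun j hj => not_le.1 (Nat.find_min hex hj)⟩
  by_contra! h
  have := Nat.find_spec hex
  rw [Ico_eq_empty_of_le h, sum_empty] at this
  linarith

theorem sub_sum_Ico_le_of_forall_sub_le {a b : ℕ → ℝ} (hstep : ∀ k, a k - b k ≤ a (k + 1))
    {n j : ℕ} (hnj : n ≤ j) : a n - ∑ k ∈ Ico n j, b k ≤ a j := by
  have : -∑ k ∈ Ico n j, b k ≤ ∑ k ∈ Ico n j, (a (k + 1) - a k) := by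
    rw [← sum_neg_distrib]
    exact sum_le_sum fun k _ => by linarith [hstep k]
  rw [sum_Ico_sub a hnj] at this
  linarith

theorem tendsto_zero_of_summable_mul_sq {η a : ℕ → ℝ} {C : ℝ} (hη : ∀ k, 0 ≤ η k)
    (ha : ∀ k, 0 ≤ a k) (hdiv : Tendsto (fun n => ∑ k ∈ range n, η k) atTop atTop)
    (hsum : Summable fun k => η k * a k ^ 2) (hstep : ∀ k, |a (k + 1) - a k| ≤ C * η k) :
    Tendsto a atTop (𝓝 0) := by
  set C' := max C 1
  have hC' : 0 < C' := zero_lt_one.trans_le (le_max_right C 1)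
  have hdrop : ∀ k, a k - C' * η k ≤ a (k + 1) := fun k => by
    have := (abs_le.1 (hstep k)).1
    nlinarith [le_max_left C 1, hη k]
  by_contra hnot
  obtain ⟨ε, hε, hfreq⟩ : ∃ ε > 0, ∀ N, ∃ n ≥ N, ε ≤ a n := by
    simpa [Metric.tendsto_atTop, Real.dist_eq, abs_of_nonneg (ha _)] using hnot
  set δ := ε / (2 * C')
  have hδ : 0 < δ := by positivity
  obtain ⟨N, hN⟩ := Metric.cauchySeq_iff'.1 hsum.hasSum.tendsto_sum_nat.cauchySeq
    (ε ^ 2 / 4 * δ) (by positivity)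
  obtain ⟨n, hnN, hεn⟩ := hfreq N
  obtain ⟨m, hnm, hmass, hbefore⟩ := exists_first_sum_Ico_ge hdiv n hδ
  -- Until the step mass since `n` reaches `δ`, `a` cannot drop below `ε / 2`.
  have hhalf : ∀ j ∈ Ico n m, ε / 2 ≤ a j := fun j hj => by
    have hdrift := sub_sum_Ico_le_of_forall_sub_le hdrop (mem_Ico.1 hj).1
    rw [← mul_sum] at hdrift
    have : C' * ∑ k ∈ Ico n j, η k ≤ C' * δ :=
      mul_le_mul_of_nonneg_left (hbefore j (mem_Ico.1 hj).2).le hC'.le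
    have hCδ : C' * δ = ε / 2 := by simp only [δ]; field_simp
    linarith
  have hlow : ε ^ 2 / 4 * δ ≤ ∑ k ∈ Ico n m, η k * a k ^ 2 :=
    calc ε ^ 2 / 4 * δ ≤ ε ^ 2 / 4 * ∑ k ∈ Ico n m, η k := by gcongr
      _ = ∑ k ∈ Ico n m, η k * (ε / 2) ^ 2 := by rw [mul_sum]; ring_nf
      _ ≤ ∑ k ∈ Ico n m, η k * a k ^ 2 := sum_le_sum fun k hk => by
          gcongr
          · exact hη k
          · exact hhalf k hk
  have hclose := hN m (hnN.trans hnm.le)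
  rw [Real.dist_eq, ← sum_Ico_eq_sub _ (hnN.trans hnm.le), ← sum_Ico_consecutive _ hnN hnm.le]
    at hclose
  have hfront : 0 ≤ ∑ k ∈ Ico N n, η k * a k ^ 2 :=
    sum_nonneg fun k _ => mul_nonneg (hη k) (sq_nonneg _)
  linarith [le_abs_self (∑ k ∈ Ico N n, η k * a k ^ 2 + ∑ k ∈ Ico n m, η k * a k ^ 2)]

theorem licm_sgd_gradient_tendsto_zero_general
    (d : ℕ) (F : EuclideanSpace ℝ (Fin d) → ℝ) (L : ℝ)
    (hF : Differentiable ℝ F)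
    (hLip : ∀ x y : EuclideanSpace ℝ (Fin d),
      ‖gradient F x - gradient F y‖ ≤ L * ‖x - y‖)
    (hbdd : BddBelow (Set.range F))
    (η : ℕ → ℝ) (hηpos : ∀ k, 0 < η k)
    (hdiv : Filter.Tendsto (fun n => ∑ k ∈ Finset.range n, η k)
      Filter.atTop Filter.atTop)
    (hsq : Summable (fun k => (η k) ^ 2))
    (w g : ℕ → EuclideanSpace ℝ (Fin d))
    (hupd : ∀ k, w (k + 1) = w k - η k • g k)
    (G c : ℝ) (hc : 0 < c)
    (hgbdd : ∀ k, ‖g k‖ ≤ G)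
    (hip : ∀ k, c * ‖gradient F (w k)‖ ^ 2 ≤ ⟪g k, gradient F (w k)⟫) :
    Filter.Tendsto (fun k => gradient F (w k)) Filter.atTop (nhds 0) := by
  have hη : ∀ k, 0 ≤ η k := fun k => (hηpos k).le
  have hdescent : ∀ k, F (w (k + 1)) ≤
      F (w k) - c * (η k * ‖gradient F (w k)‖ ^ 2) + |L| / 2 * G ^ 2 * η k ^ 2 := fun k => by
    rw [hupd k]
    exact hF.apply_sub_smul_le_of_inner_gradient_ge hLip (hη k) (hgbdd k) (hip k)
  have hsum : Summable fun k => η k * ‖gradient F (w k)‖ ^ 2 :=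
    (summable_mul_left_iff hc.ne').1 <| summable_of_succ_le_sub_add (f := F ∘ w)
      (hbdd.mono (Set.range_comp_subset_range w F))
      (fun k => mul_nonneg hc.le (mul_nonneg (hη k) (sq_nonneg _)))
      (hsq.mul_left _) (fun k => by positivity) hdescent
  have hstep : ∀ k, |‖gradient F (w (k + 1))‖ - ‖gradient F (w k)‖| ≤ |L| * G * η k := by
    intro k
    calc |‖gradient F (w (k + 1))‖ - ‖gradient F (w k)‖|
        ≤ ‖gradient F (w (k + 1)) - gradient F (w k)‖ := abs_norm_sub_norm_le _ _
      _ ≤ |L| * ‖w (k + 1) - w k‖ := (hLip _ _).trans (by gcongr; exact le_abs_self L)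
      _ = |L| * (η k * ‖g k‖) := by
          rw [hupd k, sub_sub_cancel_left, norm_neg, norm_smul, Real.norm_of_nonneg (hη k)]
      _ ≤ |L| * (η k * G) := by gcongr; exacts [hη k, hgbdd k]
      _ = |L| * G * η k := by ring
  exact tendsto_zero_iff_norm_tendsto_zero.2 <|
    tendsto_zero_of_summable_mul_sq hη (fun k => norm_nonneg _) hdiv hsum hstep

/-- Deterministic analog of Theorem 2 (almost sure convergence of LICM-SGD):
under bounded-below `F` with Lipschitz gradient, step sizes with `Σ η_k = ∞` and
`Σ η_k² < ∞`, bounded iterates and update directions making sufficiently positive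
inner products with the true gradients, the gradients converge to zero. -/
theorem licm_sgd_gradient_tendsto_zero
    (d : ℕ) (F : EuclideanSpace ℝ (Fin d) → ℝ) (L : ℝ)
    (hF : Differentiable ℝ F)
    (hLip : ∀ x y : EuclideanSpace ℝ (Fin d),
      ‖gradient F x - gradient F y‖ ≤ L * ‖x - y‖)
    (hbdd : BddBelow (Set.range F))
    (η : ℕ → ℝ) (hηpos : ∀ k, 0 < η k)
    (hdiv : Filter.Tendsto (fun n => ∑ k ∈ Finset.range n, η k)
      Filter.atTop Filter.atTop)
    (hsq : Summable (fun k => (η k) ^ 2))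
    (w g : ℕ → EuclideanSpace ℝ (Fin d))
    (hupd : ∀ k, w (k + 1) = w k - η k • g k)
    (G c R : ℝ) (hG : 0 < G) (hc : 0 < c) (hR : 0 < R)
    (hgbdd : ∀ k, ‖g k‖ ≤ G)
    (hip : ∀ k, c * ‖gradient F (w k)‖ ^ 2 ≤ ⟪g k, gradient F (w k)⟫)
    (hwbdd : ∀ k, ‖w k‖ ≤ R) :
    Filter.Tendsto (fun k => gradient F (w k)) Filter.atTop (nhds 0) :=
  licm_sgd_gradient_tendsto_zero_general d F L hF hLip hbdd η hηpos hdiv hsq w g hupd G c hc hgbdd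
    hip
end
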